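/- arXiv:2512.04933 — 4 statements merged into one kernel-verified Lean document; each statement's English description precedes it below -/
import Mathlib

section
/- For p ≥ 1 the Ullman density f_p is continuously differentiable at every x ∈ (0,1), with derivative f_p'(x) = ((p−1)/x)·f_p(x) − (p/π)·1/(x·√(1−x²)). -/
open MeasureTheory

/-- The Ullman density `f_p(x) = (p/π) ∫_{|x|}^1 t^{p-1}/√(t²-x²) dt`. -/
noncomputable def ullman (p x : ℝ) : ℝ :=
  (p / Real.pi) * ∫ t in Set.Ioo |x| 1, t ^ (p - 1) / Real.sqrt (t ^ 2 - x ^ 2)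

/-- kernel of the transformed integral -/
noncomputable def uker (p : ℝ) : ℝ → ℝ := fun u => u ^ (p - 1) / Real.sqrt (u ^ 2 - 1)

noncomputable def uG (p y : ℝ) : ℝ := ∫ u in (1:ℝ)..y, uker p u

lemma measurable_uker (p : ℝ) : Measurable (uker p) := by
  unfold uker
  exact (measurable_id.pow_const _).div
    (Real.continuous_sqrt.measurable.comp ((measurable_id.pow_const 2).sub measurable_const))

lemma uker_intervalIntegrable (p : ℝ) (hp : 1 ≤ p) {y : ℝ} (hy : 1 ≤ y) :
    IntervalIntegrable (uker p) volume 1 y := by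
  have hbound : IntervalIntegrable (fun u : ℝ => y ^ (p - 1) * (u - 1) ^ (-(1/2) : ℝ))
      volume 1 y := by
    have h1 : IntervalIntegrable (fun u : ℝ => u ^ (-(1/2) : ℝ)) volume 0 (y - 1) :=
      intervalIntegral.intervalIntegrable_rpow' (by norm_num)
    have h2 := (h1.comp_sub_right 1).const_mul (y ^ (p - 1))
    simpa using h2
  refine hbound.mono_fun ((measurable_uker p).aestronglyMeasurable) ?_
  have hsub : Set.uIoc (1:ℝ) y = Set.Ioc 1 y := Set.uIoc_of_le hy
  filter_upwards [ae_restrict_mem measurableSet_uIoc] with u hu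
  rw [hsub] at hu
  obtain ⟨hu1, huy⟩ := hu
  have hu0 : (0:ℝ) < u := lt_trans one_pos hu1
  have hnum : u ^ (p - 1) ≤ y ^ (p - 1) :=
    Real.rpow_le_rpow hu0.le huy (by linarith)
  have hs1 : Real.sqrt (u - 1) ≤ Real.sqrt (u ^ 2 - 1) := by
    apply Real.sqrt_le_sqrt; nlinarith
  have hs0 : 0 < Real.sqrt (u - 1) := Real.sqrt_pos.2 (by linarith)
  have hden : (Real.sqrt (u ^ 2 - 1))⁻¹ ≤ (Real.sqrt (u - 1))⁻¹ :=
    inv_anti₀ hs0 hs1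
  have hknn : 0 ≤ uker p u := by
    unfold uker
    exact div_nonneg (Real.rpow_nonneg hu0.le _) (Real.sqrt_nonneg _)
  have hrw : (u - 1) ^ (-(1/2) : ℝ) = (Real.sqrt (u - 1))⁻¹ := by
    rw [Real.sqrt_eq_rpow, ← Real.rpow_neg (by linarith)]
  rw [Real.norm_eq_abs, Real.norm_eq_abs, abs_of_nonneg hknn, abs_of_nonneg (mul_nonneg (Real.rpow_nonneg (by linarith) _) (Real.rpow_nonneg (by linarith) _))]
  unfold uker
  rw [div_eq_mul_inv, hrw]
  exact mul_le_mul hnum hden (by positivity) (Real.rpow_nonneg (by linarith) _)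

lemma ullman_eq (p : ℝ) {x : ℝ} (hx : x ∈ Set.Ioo (0:ℝ) 1) :
    ullman p x = (p / Real.pi) * (x ^ (p - 1) * uG p (1/x)) := by
  obtain ⟨hx0, hx1⟩ := hx
  have hxne : x ≠ 0 := hx0.ne'
  unfold ullman uG
  congr 1
  have habs : |x| = x := abs_of_pos hx0
  rw [habs]
  -- set integral to interval integral
  have h1 : ∫ t in Set.Ioo x 1, t ^ (p - 1) / Real.sqrt (t ^ 2 - x ^ 2)
      = ∫ t in x..(1:ℝ), t ^ (p - 1) / Real.sqrt (t ^ 2 - x ^ 2) := by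
    rw [intervalIntegral.integral_of_le hx1.le, integral_Ioc_eq_integral_Ioo]
  rw [h1]
  -- substitution t = x * u
  have h2 := intervalIntegral.integral_comp_mul_left
    (a := (1:ℝ)) (b := 1/x) (fun t => t ^ (p - 1) / Real.sqrt (t ^ 2 - x ^ 2)) hxne
  rw [mul_one, mul_one_div, div_self hxne] at h2
  have h3 : ∫ u in (1:ℝ)..(1/x), (x * u) ^ (p - 1) / Real.sqrt ((x * u) ^ 2 - x ^ 2)
      = ∫ u in (1:ℝ)..(1/x), (x ^ (p - 1) / x) * uker p u := by
    apply intervalIntegral.integral_congr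
    intro u hu
    rw [Set.uIcc_of_le (by rw [le_div_iff₀ hx0]; linarith)] at hu
    have hu1 : 1 ≤ u := hu.1
    have hu0 : 0 ≤ u := by linarith
    unfold uker
    show (x * u) ^ (p - 1) / Real.sqrt ((x * u) ^ 2 - x ^ 2)
      = x ^ (p - 1) / x * (u ^ (p - 1) / Real.sqrt (u ^ 2 - 1))
    have e1 : (x * u) ^ (p - 1) = x ^ (p - 1) * u ^ (p - 1) := Real.mul_rpow hx0.le hu0
    have e2 : Real.sqrt ((x * u) ^ 2 - x ^ 2) = x * Real.sqrt (u ^ 2 - 1) := by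
      have : (x * u) ^ 2 - x ^ 2 = x ^ 2 * (u ^ 2 - 1) := by ring
      rw [this, Real.sqrt_mul (sq_nonneg x), Real.sqrt_sq hx0.le]
    rw [e1, e2, mul_div_mul_comm]
  rw [h3, intervalIntegral.integral_const_mul] at h2
  rw [smul_eq_mul] at h2
  calc ∫ t in x..(1:ℝ), t ^ (p - 1) / Real.sqrt (t ^ 2 - x ^ 2)
      = x * (x⁻¹ * ∫ t in x..(1:ℝ), t ^ (p - 1) / Real.sqrt (t ^ 2 - x ^ 2)) := by
        field_simp
    _ = x * (x ^ (p - 1) / x * ∫ u in (1:ℝ)..(1/x), uker p u) := by rw [← h2]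
    _ = x ^ (p - 1) * ∫ u in (1:ℝ)..(1/x), uker p u := by field_simp

lemma ullman_hasDerivAt (p : ℝ) (hp : 1 ≤ p) {x : ℝ} (hx : x ∈ Set.Ioo (0:ℝ) 1) :
    HasDerivAt (ullman p)
      ((p - 1) / x * ullman p x - (p / Real.pi) * (1 / (x * Real.sqrt (1 - x ^ 2)))) x := by
  obtain ⟨hx0, hx1⟩ := hx
  have hxne : x ≠ 0 := hx0.ne'
  have hy : 1 < 1/x := by rw [lt_div_iff₀ hx0]; linarith
  have hy0 : (0:ℝ) < 1/x := by positivity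
  -- FTC for G at 1/x
  have hsq : (1:ℝ) < (1/x) ^ 2 := by nlinarith
  have hcont : ContinuousAt (uker p) (1/x) := by
    unfold uker
    apply ContinuousAt.div
    · exact Real.continuousAt_rpow_const _ _ (Or.inl hy0.ne')
    · exact (Real.continuous_sqrt.comp (by continuity)).continuousAt
    · exact (Real.sqrt_pos.2 (by linarith)).ne'
  have hmeasAt : StronglyMeasurableAtFilter (uker p) (nhds (1/x)) :=
    ⟨Set.univ, Filter.univ_mem, ((measurable_uker p).stronglyMeasurable).aestronglyMeasurable.restrict⟩
  have hG : HasDerivAt (uG p) (uker p (1/x)) (1/x) :=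
    intervalIntegral.integral_hasDerivAt_right (uker_intervalIntegrable p hp hy.le) hmeasAt hcont
  have hinv : HasDerivAt (fun z : ℝ => 1/z) (-(x^2)⁻¹) x := by
    simpa only [one_div] using hasDerivAt_inv hxne
  have hcomp : HasDerivAt (fun z => uG p (1/z)) (uker p (1/x) * -(x^2)⁻¹) x := hG.comp x hinv
  have hpow : HasDerivAt (fun z : ℝ => z ^ (p - 1)) ((p - 1) * x ^ (p - 1 - 1)) x :=
    Real.hasDerivAt_rpow_const (Or.inl hxne)
  have hmul := (hpow.mul hcomp).const_mul (p / Real.pi)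
  have hev : ullman p =ᶠ[nhds x] fun z => (p / Real.pi) * (z ^ (p - 1) * uG p (1/z)) := by
    filter_upwards [Ioo_mem_nhds hx0 hx1] with z hz
    exact ullman_eq p hz
  have hval := hmul.congr_of_eventuallyEq hev
  -- rewrite the derivative value
  have hs0 : 0 < Real.sqrt (1 - x ^ 2) := Real.sqrt_pos.2 (by nlinarith)
  have huker : uker p (1/x) = (x ^ (p - 1))⁻¹ * (x / Real.sqrt (1 - x ^ 2)) := by
    unfold uker
    have e1 : (1/x : ℝ) ^ (p - 1) = (x ^ (p - 1))⁻¹ := by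
      rw [one_div, ← Real.inv_rpow hx0.le]
    have e2 : Real.sqrt ((1/x) ^ 2 - 1) = Real.sqrt (1 - x ^ 2) * x⁻¹ := by
      have h : (1/x : ℝ) ^ 2 - 1 = (1 - x ^ 2) * (x ^ 2)⁻¹ := by field_simp
      rw [h, Real.sqrt_mul (by nlinarith), Real.sqrt_inv, Real.sqrt_sq hx0.le]
    rw [e1, e2]
    field_simp
  have hA : x ^ (p - 1 - 1) = x ^ (p - 1) / x := by
    rw [Real.rpow_sub hx0, Real.rpow_one]
  have hA0 : 0 < x ^ (p - 1) := Real.rpow_pos_of_pos hx0 _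
  have hveq : (p / Real.pi) * ((p - 1) * x ^ (p - 1 - 1) * uG p (1/x)
        + x ^ (p - 1) * (uker p (1/x) * -(x^2)⁻¹))
      = (p - 1) / x * ullman p x
        - (p / Real.pi) * (1 / (x * Real.sqrt (1 - x ^ 2))) := by
    rw [huker, hA, ullman_eq p ⟨hx0, hx1⟩]
    field_simp
    ring
  rwa [hveq] at hval

theorem ullman_contDiffAt (p x : ℝ) (hp : 1 ≤ p) (hx : x ∈ Set.Ioo (0 : ℝ) 1) :
    HasDerivAt (ullman p)
      ((p - 1) / x * ullman p x - (p / Real.pi) * (1 / (x * Real.sqrt (1 - x ^ 2)))) x ∧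
    ContinuousAt (deriv (ullman p)) x := by
  obtain ⟨hx0, hx1⟩ := hx
  have hxne : x ≠ 0 := hx0.ne'
  refine ⟨ullman_hasDerivAt p hp ⟨hx0, hx1⟩, ?_⟩
  set φ : ℝ → ℝ := fun y =>
    (p - 1) / y * ullman p y - (p / Real.pi) * (1 / (y * Real.sqrt (1 - y ^ 2))) with hφ
  have heq : φ =ᶠ[nhds x] deriv (ullman p) := by
    filter_upwards [Ioo_mem_nhds hx0 hx1] with y hy
    exact ((ullman_hasDerivAt p hp hy).deriv).symm
  have hs0 : 0 < Real.sqrt (1 - x ^ 2) := Real.sqrt_pos.2 (by nlinarith)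
  have hcu : ContinuousAt (ullman p) x :=
    (ullman_hasDerivAt p hp ⟨hx0, hx1⟩).differentiableAt.continuousAt
  have hφc : ContinuousAt φ x := by
    apply ContinuousAt.sub
    · exact (continuousAt_const.div continuousAt_id hxne).mul hcu
    · apply continuousAt_const.mul
      apply continuousAt_const.div
      · exact continuousAt_id.mul
          (Real.continuous_sqrt.continuousAt.comp (by fun_prop))
      · exact mul_ne_zero hxne hs0.ne'
  exact hφc.congr heq
end

section
/- For p ≥ 3/2 there exist positive constants c and C such that c·√(1−|x|) ≤ f_p(x) ≤ C·√(1−|x|) for all x with 1/2 ≤ |x| ≤ 1. -/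
open MeasureTheory

lemma ullman_aux_J (a : ℝ) (ha2 : a ≤ 1) :
    ∫ t in Set.Ioo a 1, (t - a) ^ (-(1/2) : ℝ) = 2 * Real.sqrt (1 - a) := by
  have h1 : ∫ t in Set.Ioo a 1, (t - a) ^ (-(1/2) : ℝ)
      = ∫ t in a..1, (t - a) ^ (-(1/2) : ℝ) := by
    rw [intervalIntegral.integral_of_le ha2, integral_Ioc_eq_integral_Ioo]
  rw [h1, intervalIntegral.integral_comp_sub_right (fun u => u ^ (-(1/2) : ℝ)) a,
    sub_self, integral_rpow (Or.inl (by norm_num))]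
  have h0 : (0:ℝ) ^ ((-(1/2) : ℝ) + 1) = 0 := by
    rw [Real.zero_rpow (by norm_num)]
  rw [h0]
  have h2 : (-(1/2) : ℝ) + 1 = 1/2 := by norm_num
  rw [h2, Real.sqrt_eq_rpow]
  ring

lemma ullman_aux_gint (a : ℝ) (ha2 : a ≤ 1) :
    IntegrableOn (fun t => (t - a) ^ (-(1/2) : ℝ)) (Set.Ioo a 1) := by
  have h : IntervalIntegrable (fun t => (t - a) ^ (-(1/2) : ℝ)) volume a 1 := by
    have := (intervalIntegral.intervalIntegrable_rpow' (a := 0) (b := 1 - a)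
      (r := -(1/2)) (by norm_num)).comp_sub_right a
    simpa using this
  exact (intervalIntegrable_iff_integrableOn_Ioo_of_le ha2).mp h

theorem ullman_sqrt_bounds (p : ℝ) (hp : (3 : ℝ) / 2 ≤ p) :
    ∃ c > 0, ∃ C > 0, ∀ x : ℝ, 1 / 2 ≤ |x| → |x| ≤ 1 →
      c * Real.sqrt (1 - |x|) ≤ ullman p x ∧ ullman p x ≤ C * Real.sqrt (1 - |x|) := by
  have hpi : 0 < Real.pi := Real.pi_pos
  have hppos : (0:ℝ) < p := by linarith
  set k : ℝ := ((1:ℝ)/2) ^ (p-1) / Real.sqrt 2 with hk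
  have hs2 : (0:ℝ) < Real.sqrt 2 := Real.sqrt_pos.mpr (by norm_num)
  have hkpos : 0 < k := div_pos (Real.rpow_pos_of_pos (by norm_num) _) hs2
  refine ⟨(p/Real.pi) * (2*k), by positivity, (p/Real.pi) * 2, by positivity, ?_⟩
  intro x hx1 hx2
  set a := |x| with ha
  have hx2sq : x ^ 2 = a ^ 2 := (sq_abs x).symm
  set f : ℝ → ℝ := fun t => t ^ (p - 1) / Real.sqrt (t ^ 2 - a ^ 2) with hf
  have hull : ullman p x = (p / Real.pi) * ∫ t in Set.Ioo a 1, f t := by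
    rw [ullman]
    congr 1
    apply setIntegral_congr_fun measurableSet_Ioo
    intro t _
    rw [hf]; simp [hx2sq]
  -- pointwise bounds
  have hpt : ∀ t ∈ Set.Ioo a 1,
      k * (t - a) ^ (-(1/2) : ℝ) ≤ f t ∧ f t ≤ (t - a) ^ (-(1/2) : ℝ) := by
    intro t ht
    obtain ⟨ht1, ht2⟩ := ht
    have hta : 0 < t - a := by linarith
    have htpos : 0 < t := by linarith
    have hsplit : Real.sqrt (t ^ 2 - a ^ 2) = Real.sqrt (t - a) * Real.sqrt (t + a) := by
      rw [show t ^ 2 - a ^ 2 = (t - a) * (t + a) by ring, Real.sqrt_mul hta.le]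
    have hsta : 0 < Real.sqrt (t - a) := Real.sqrt_pos.mpr hta
    have hone_le : (1:ℝ) ≤ Real.sqrt (t + a) := by
      rw [show (1:ℝ) = Real.sqrt 1 by simp]
      exact Real.sqrt_le_sqrt (by linarith)
    have hle2 : Real.sqrt (t + a) ≤ Real.sqrt 2 := Real.sqrt_le_sqrt (by linarith)
    have hrpow : (t - a) ^ (-(1/2) : ℝ) = (Real.sqrt (t - a))⁻¹ := by
      rw [Real.rpow_neg hta.le, Real.sqrt_eq_rpow]
    constructor
    · -- lower bound
      show k * (t - a) ^ (-(1/2) : ℝ) ≤ t ^ (p - 1) / Real.sqrt (t ^ 2 - a ^ 2)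
      rw [hrpow]
      have h1 : k * (Real.sqrt (t - a))⁻¹
          = ((1:ℝ)/2) ^ (p-1) / (Real.sqrt (t - a) * Real.sqrt 2) := by
        have hne : Real.sqrt (t - a) ≠ 0 := ne_of_gt hsta
        have hne2 : Real.sqrt 2 ≠ 0 := ne_of_gt hs2
        rw [hk]
        field_simp
      rw [h1, hsplit]
      apply div_le_div₀ (Real.rpow_nonneg htpos.le _)
      · exact Real.rpow_le_rpow (by norm_num) (by linarith) (by linarith)
      · positivity
      · exact mul_le_mul_of_nonneg_left hle2 hsta.le
    · -- upper bound
      show t ^ (p - 1) / Real.sqrt (t ^ 2 - a ^ 2) ≤ (t - a) ^ (-(1/2) : ℝ)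
      rw [hrpow, hsplit, ← one_div]
      apply div_le_div₀ (by norm_num)
      · exact Real.rpow_le_one htpos.le ht2.le (by linarith)
      · exact hsta
      · calc Real.sqrt (t - a) = Real.sqrt (t - a) * 1 := by ring
          _ ≤ Real.sqrt (t - a) * Real.sqrt (t + a) :=
            mul_le_mul_of_nonneg_left hone_le hsta.le
  have hgint := ullman_aux_gint a hx2
  have hJ := ullman_aux_J a hx2
  -- f measurable & integrable on Ioo a 1
  have hfmeas : AEStronglyMeasurable f (volume.restrict (Set.Ioo a 1)) := by
    apply ContinuousOn.aestronglyMeasurable _ measurableSet_Ioo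
    apply ContinuousOn.div
    · apply ContinuousOn.rpow_const continuousOn_id
      intro t ht
      left
      have : (0:ℝ) < t := by have := ht.1; linarith
      exact ne_of_gt this
    · exact (Real.continuous_sqrt.comp (by continuity)).continuousOn
    · intro t ht
      have hta : 0 < t - a := by linarith [ht.1]
      have hpos : 0 < t ^ 2 - a ^ 2 := by nlinarith [ht.1, abs_nonneg x]
      exact ne_of_gt (Real.sqrt_pos.mpr hpos)
  have hfint : IntegrableOn f (Set.Ioo a 1) := by
    apply Integrable.mono hgint hfmeas
    filter_upwards [ae_restrict_mem measurableSet_Ioo] with t ht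
    have h := hpt t ht
    have hta : 0 < t - a := by linarith [ht.1, ht.2]
    have hfnn : 0 ≤ f t := by
      have := h.1
      nlinarith [Real.rpow_pos_of_pos hta (-(1/2) : ℝ), hkpos]
    rw [Real.norm_eq_abs, Real.norm_eq_abs, abs_of_nonneg hfnn,
      abs_of_nonneg (Real.rpow_pos_of_pos hta (-(1/2) : ℝ)).le]
    exact h.2
  have hkgint : IntegrableOn (fun t => k * (t - a) ^ (-(1/2) : ℝ)) (Set.Ioo a 1) :=
    hgint.const_mul k
  have hlow : k * (2 * Real.sqrt (1 - a)) ≤ ∫ t in Set.Ioo a 1, f t := by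
    have h := setIntegral_mono_on hkgint hfint measurableSet_Ioo (fun t ht => (hpt t ht).1)
    rwa [integral_const_mul, hJ] at h
  have hhigh : (∫ t in Set.Ioo a 1, f t) ≤ 2 * Real.sqrt (1 - a) := by
    have h := setIntegral_mono_on hfint hgint measurableSet_Ioo (fun t ht => (hpt t ht).2)
    rwa [hJ] at h
  constructor
  · rw [hull]
    calc (p/Real.pi) * (2*k) * Real.sqrt (1 - a)
        = (p/Real.pi) * (k * (2 * Real.sqrt (1 - a))) := by ring
      _ ≤ (p/Real.pi) * ∫ t in Set.Ioo a 1, f t :=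
          mul_le_mul_of_nonneg_left hlow (by positivity)
  · rw [hull]
    calc (p/Real.pi) * ∫ t in Set.Ioo a 1, f t
        ≤ (p/Real.pi) * (2 * Real.sqrt (1 - a)) :=
          mul_le_mul_of_nonneg_left hhigh (by positivity)
      _ = (p/Real.pi) * 2 * Real.sqrt (1 - a) := by ring
end

section
/- For p ≥ 3/2, the Ullman density f_p is Hölder continuous of order 1/2 on [−1,1]: there exists L > 0 such that |f_p(x) − f_p(y)| ≤ L·|x − y|^{1/2} for all x, y ∈ [−1,1]. -/
open MeasureTheory Set

lemma rpow_neg_half (z : ℝ) (hz : 0 ≤ z) : z ^ (-(1/2) : ℝ) = (Real.sqrt z)⁻¹ := by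
  rw [Real.rpow_neg hz, Real.sqrt_eq_rpow]

lemma B_intInt (c a b : ℝ) :
    IntervalIntegrable (fun t => (t - c) ^ (-(1/2) : ℝ)) volume a b := by
  have := (intervalIntegral.intervalIntegrable_rpow' (a := a - c) (b := b - c)
      (r := -(1/2)) (by norm_num)).comp_sub_right c
  simpa using this

lemma B_integral (c a b : ℝ) :
    ∫ t in a..b, (t - c) ^ (-(1/2) : ℝ)
      = 2 * (b - c) ^ ((1:ℝ)/2) - 2 * (a - c) ^ ((1:ℝ)/2) := by
  rw [intervalIntegral.integral_comp_sub_right (fun t => t ^ (-(1/2) : ℝ)) c,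
    integral_rpow (Or.inl (by norm_num))]
  norm_num
  ring

lemma g_le_B (p c t : ℝ) (hp : (3:ℝ)/2 ≤ p) (hc : 0 ≤ c) (hct : c < t) (ht1 : t ≤ 1) :
    t ^ (p-1) / Real.sqrt (t^2 - c^2) ≤ (t - c) ^ (-(1/2) : ℝ) := by
  have ht : 0 < t := lt_of_le_of_lt hc hct
  have e : t^2 - c^2 = (t - c) * (t + c) := by ring
  have hsplit : Real.sqrt (t^2 - c^2) = Real.sqrt (t - c) * Real.sqrt (t + c) := by
    rw [e, Real.sqrt_mul (by linarith)]
  have h1 : t ^ (p-1) ≤ Real.sqrt t := by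
    rw [Real.sqrt_eq_rpow]
    exact Real.rpow_le_rpow_of_exponent_ge ht ht1 (by linarith)
  have h2 : Real.sqrt t ≤ Real.sqrt (t + c) := Real.sqrt_le_sqrt (by linarith)
  have hu : 0 < Real.sqrt (t - c) := Real.sqrt_pos.2 (by linarith)
  have hs : 0 < Real.sqrt t := Real.sqrt_pos.2 ht
  rw [hsplit, rpow_neg_half _ (by linarith)]
  calc t ^ (p-1) / (Real.sqrt (t-c) * Real.sqrt (t+c))
      ≤ Real.sqrt t / (Real.sqrt (t-c) * Real.sqrt t) := by
        apply div_le_div₀ (Real.sqrt_nonneg t) h1 (by positivity)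
        exact mul_le_mul_of_nonneg_left h2 hu.le
    _ = (Real.sqrt (t-c))⁻¹ := by field_simp

lemma g_diff_le (p x y t : ℝ) (hp : (3:ℝ)/2 ≤ p) (hy : 0 ≤ y) (hyx : y ≤ x)
    (hxt : x < t) (ht1 : t ≤ 1) :
    t ^ (p-1) / Real.sqrt (t^2 - x^2) - t ^ (p-1) / Real.sqrt (t^2 - y^2)
      ≤ (t - x) ^ (-(1/2) : ℝ) - (t - y) ^ (-(1/2) : ℝ) := by
  have ht : 0 < t := lt_of_le_of_lt (hy.trans hyx) hxt
  have hsx : Real.sqrt (t^2 - x^2) = Real.sqrt (t - x) * Real.sqrt (t + x) := by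
    rw [show t^2 - x^2 = (t-x)*(t+x) by ring, Real.sqrt_mul (by linarith)]
  have hsy : Real.sqrt (t^2 - y^2) = Real.sqrt (t - y) * Real.sqrt (t + y) := by
    rw [show t^2 - y^2 = (t-y)*(t+y) by ring, Real.sqrt_mul (by linarith)]
  set u := Real.sqrt (t - x) with hu_def
  set u' := Real.sqrt (t - y) with hu'_def
  set s := Real.sqrt (t + x) with hs_def
  set s' := Real.sqrt (t + y) with hs'_def
  set a := t ^ (p-1) with ha_def
  have hu : 0 < u := Real.sqrt_pos.2 (by linarith)
  have hu' : 0 < u' := Real.sqrt_pos.2 (by linarith)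
  have huu' : u ≤ u' := Real.sqrt_le_sqrt (by linarith)
  have hs' : 0 < s' := Real.sqrt_pos.2 (by linarith)
  have hss' : s' ≤ s := Real.sqrt_le_sqrt (by linarith)
  have hs : 0 < s := lt_of_lt_of_le hs' hss'
  have ha : 0 ≤ a := Real.rpow_nonneg ht.le _
  have has : a ≤ s := by
    have h1 : a ≤ Real.sqrt t := by
      rw [ha_def, Real.sqrt_eq_rpow]
      exact Real.rpow_le_rpow_of_exponent_ge ht ht1 (by linarith)
    exact h1.trans (Real.sqrt_le_sqrt (by linarith))
  have hinv : u⁻¹ - u'⁻¹ ≥ 0 := by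
    have := inv_anti₀ hu huu'
    linarith
  rw [hsx, hsy, rpow_neg_half _ (by linarith), rpow_neg_half _ (by linarith)]
  calc a / (u * s) - a / (u' * s')
      ≤ a / (u * s) - a / (u' * s) := by
        have : a / (u' * s) ≤ a / (u' * s') := by
          apply div_le_div_of_nonneg_left ha (by positivity)
          exact mul_le_mul_of_nonneg_left hss' hu'.le
        linarith
    _ = a / s * (u⁻¹ - u'⁻¹) := by field_simp
    _ ≤ 1 * (u⁻¹ - u'⁻¹) := by
        apply mul_le_mul_of_nonneg_right _ hinv
        rw [div_le_one hs]; exact has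
    _ = u⁻¹ - u'⁻¹ := one_mul _

lemma g_diff_nonneg (p x y t : ℝ) (hy : 0 ≤ y) (hyx : y ≤ x) (hxt : x < t) :
    t ^ (p-1) / Real.sqrt (t^2 - y^2) ≤ t ^ (p-1) / Real.sqrt (t^2 - x^2) := by
  have ht : 0 < t := lt_of_le_of_lt (hy.trans hyx) hxt
  apply div_le_div_of_nonneg_left (Real.rpow_nonneg ht.le _)
  · exact Real.sqrt_pos.2 (by nlinarith)
  · exact Real.sqrt_le_sqrt (by nlinarith)

lemma g_meas (p c : ℝ) : Measurable (fun t : ℝ => t ^ (p-1) / Real.sqrt (t^2 - c^2)) := by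
  fun_prop

lemma g_integrableOn (p c a b : ℝ) (hp : (3:ℝ)/2 ≤ p) (hc : 0 ≤ c) (hca : c ≤ a) (hb1 : b ≤ 1) :
    IntegrableOn (fun t : ℝ => t ^ (p-1) / Real.sqrt (t^2 - c^2)) (Ioo a b) := by
  have hB : IntegrableOn (fun t : ℝ => (t - c) ^ (-(1/2) : ℝ)) (Ioo a b) := by
    rcases le_total a b with h | h
    · exact (((intervalIntegrable_iff_integrableOn_Ioc_of_le h).1
        (B_intInt c a b)).mono_set Ioo_subset_Ioc_self)
    · simp [Ioo_eq_empty_of_le h]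
  apply Integrable.mono' hB ((g_meas p c).aestronglyMeasurable.restrict)
  rw [ae_restrict_iff' measurableSet_Ioo]
  filter_upwards with t ht
  have h1 : c < t := lt_of_le_of_lt hca ht.1
  have h0 : 0 ≤ t ^ (p-1) / Real.sqrt (t^2 - c^2) :=
    div_nonneg (Real.rpow_nonneg (le_of_lt (lt_of_le_of_lt hc h1)) _) (Real.sqrt_nonneg _)
  rw [Real.norm_eq_abs, abs_of_nonneg h0]
  exact g_le_B p c t hp hc h1 (le_of_lt (lt_of_lt_of_le ht.2 hb1))

lemma B_setIntegral (c a b : ℝ) (hab : a ≤ b) :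
    ∫ t in Ioo a b, (t - c) ^ (-(1/2) : ℝ)
      = 2 * (b - c) ^ ((1:ℝ)/2) - 2 * (a - c) ^ ((1:ℝ)/2) := by
  rw [← integral_Ioc_eq_integral_Ioo, ← intervalIntegral.integral_of_le hab, B_integral]

lemma g_integral_le (p c a b : ℝ) (hp : (3:ℝ)/2 ≤ p) (hc : 0 ≤ c) (hca : c ≤ a)
    (hab : a ≤ b) (hb1 : b ≤ 1) :
    ∫ t in Ioo a b, t ^ (p-1) / Real.sqrt (t^2 - c^2)
      ≤ 2 * (b - c) ^ ((1:ℝ)/2) - 2 * (a - c) ^ ((1:ℝ)/2) := by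
  rw [← B_setIntegral c a b hab]
  apply setIntegral_mono_on (g_integrableOn p c a b hp hc hca hb1) _ measurableSet_Ioo
  · intro t ht
    exact g_le_B p c t hp hc (lt_of_le_of_lt hca ht.1) (le_of_lt (lt_of_lt_of_le ht.2 hb1))
  · rcases le_total a b with h | h
    · exact (((intervalIntegrable_iff_integrableOn_Ioc_of_le h).1
        (B_intInt c a b)).mono_set Ioo_subset_Ioc_self)
    · simp [Ioo_eq_empty_of_le h]

lemma core (p x y : ℝ) (hp : (3:ℝ)/2 ≤ p) (hy : 0 ≤ y) (hyx : y ≤ x) (hx1 : x ≤ 1) :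
    |ullman p x - ullman p y| ≤ (2*p/Real.pi) * (x - y) ^ ((1:ℝ)/2) := by
  have hx0 : 0 ≤ x := hy.trans hyx
  set gx := fun t : ℝ => t ^ (p-1) / Real.sqrt (t^2 - x^2) with hgx
  set gy := fun t : ℝ => t ^ (p-1) / Real.sqrt (t^2 - y^2) with hgy
  have hIx : IntegrableOn gx (Ioo x 1) := g_integrableOn p x x 1 hp hx0 le_rfl le_rfl
  have hIyx : IntegrableOn gy (Ioo y x) := g_integrableOn p y y x hp hy le_rfl hx1
  have hIy1 : IntegrableOn gy (Ioo x 1) := g_integrableOn p y x 1 hp hy hyx le_rfl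
  have hsplit : ∫ t in Ioo y 1, gy t = (∫ t in Ioo y x, gy t) + ∫ t in Ioo x 1, gy t := by
    rw [← integral_Ioc_eq_integral_Ioo, ← integral_Ioc_eq_integral_Ioo,
      ← integral_Ioc_eq_integral_Ioo,
      ← intervalIntegral.integral_of_le (hyx.trans hx1), ← intervalIntegral.integral_of_le hyx,
      ← intervalIntegral.integral_of_le hx1]
    exact (intervalIntegral.integral_add_adjacent_intervals
      ((intervalIntegrable_iff_integrableOn_Ioc_of_le hyx).2
        ((integrableOn_Ioc_iff_integrableOn_Ioo).2 hIyx))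
      ((intervalIntegrable_iff_integrableOn_Ioc_of_le hx1).2
        ((integrableOn_Ioc_iff_integrableOn_Ioo).2 hIy1))).symm
  set M := 2 * (x - y) ^ ((1:ℝ)/2) with hM
  have hT0 : 0 ≤ ∫ t in Ioo y x, gy t := by
    apply setIntegral_nonneg measurableSet_Ioo
    intro t ht
    exact div_nonneg (Real.rpow_nonneg (le_of_lt (lt_of_le_of_lt hy ht.1)) _) (Real.sqrt_nonneg _)
  have hTM : ∫ t in Ioo y x, gy t ≤ M := by
    have h := g_integral_le p y y x hp hy le_rfl hyx hx1
    have h0 : ((y:ℝ) - y) ^ ((1:ℝ)/2) = 0 := by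
      rw [sub_self, Real.zero_rpow (by norm_num)]
    rw [h0, hM.symm] at h
    linarith
  have hD0 : ∫ t in Ioo x 1, gy t ≤ ∫ t in Ioo x 1, gx t := by
    apply setIntegral_mono_on hIy1 hIx measurableSet_Ioo
    intro t ht
    exact g_diff_nonneg p x y t hy hyx ht.1
  have hBx : IntegrableOn (fun t : ℝ => (t - x) ^ (-(1/2) : ℝ)) (Ioo x 1) :=
    ((intervalIntegrable_iff_integrableOn_Ioc_of_le hx1).1 (B_intInt x x 1)).mono_set
      Ioo_subset_Ioc_self
  have hBy : IntegrableOn (fun t : ℝ => (t - y) ^ (-(1/2) : ℝ)) (Ioo x 1) :=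
    ((intervalIntegrable_iff_integrableOn_Ioc_of_le hx1).1 (B_intInt y x 1)).mono_set
      Ioo_subset_Ioc_self
  have hDM : (∫ t in Ioo x 1, gx t) - ∫ t in Ioo x 1, gy t ≤ M := by
    rw [← integral_sub hIx hIy1]
    have step : ∫ t in Ioo x 1, (gx t - gy t)
        ≤ ∫ t in Ioo x 1, ((t - x) ^ (-(1/2) : ℝ) - (t - y) ^ (-(1/2) : ℝ)) := by
      apply setIntegral_mono_on (hIx.sub hIy1) (hBx.sub hBy) measurableSet_Ioo
      intro t ht
      exact g_diff_le p x y t hp hy hyx ht.1 ht.2.le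
    refine step.trans ?_
    rw [integral_sub hBx hBy, B_setIntegral x x 1 hx1, B_setIntegral y x 1 hx1]
    have h1 : (1 - x) ^ ((1:ℝ)/2) ≤ (1 - y) ^ ((1:ℝ)/2) :=
      Real.rpow_le_rpow (by linarith) (by linarith) (by norm_num)
    have h2 : ((x:ℝ) - x) ^ ((1:ℝ)/2) = 0 := by
      simp [Real.zero_rpow]
    rw [h2]
    simp only [hM]
    linarith
  have hkey : |(∫ t in Ioo x 1, gx t) - ∫ t in Ioo y 1, gy t| ≤ M := by
    rw [hsplit, abs_le]
    constructor <;> linarith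
  have hux : ullman p x = (p/Real.pi) * ∫ t in Ioo x 1, gx t := by
    simp only [ullman, abs_of_nonneg hx0, hgx]
  have huy : ullman p y = (p/Real.pi) * ∫ t in Ioo y 1, gy t := by
    simp only [ullman, abs_of_nonneg hy, hgy]
  have hp0 : (0:ℝ) < p := by linarith
  have hppi : 0 ≤ p / Real.pi := div_nonneg hp0.le Real.pi_pos.le
  rw [hux, huy, ← mul_sub, abs_mul, abs_of_nonneg hppi]
  calc p / Real.pi * |(∫ t in Ioo x 1, gx t) - ∫ t in Ioo y 1, gy t|
      ≤ p / Real.pi * M := mul_le_mul_of_nonneg_left hkey hppi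
    _ = (2*p/Real.pi) * (x - y) ^ ((1:ℝ)/2) := by rw [hM]; ring

lemma ullman_abs (p x : ℝ) : ullman p x = ullman p |x| := by
  simp [ullman, abs_abs, sq_abs]

theorem ullman_holder_half (p : ℝ) (hp : (3 : ℝ) / 2 ≤ p) :
    ∃ L > 0, ∀ x ∈ Set.Icc (-1 : ℝ) 1, ∀ y ∈ Set.Icc (-1 : ℝ) 1,
      |ullman p x - ullman p y| ≤ L * |x - y| ^ ((1 : ℝ) / 2) := by
  have hp0 : (0:ℝ) < p := by linarith
  refine ⟨2*p/Real.pi, by positivity, ?_⟩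
  intro x hx y hy
  have hL : (0:ℝ) ≤ 2*p/Real.pi := by positivity
  have ha1 : |x| ≤ 1 := abs_le.2 ⟨hx.1, hx.2⟩
  have hb1 : |y| ≤ 1 := abs_le.2 ⟨hy.1, hy.2⟩
  have hux : ullman p x = ullman p |x| := ullman_abs p x
  have huy : ullman p y = ullman p |y| := ullman_abs p y
  set a := |x| with haa
  set b := |y| with hbb
  rw [hux, huy]
  rcases le_total b a with h | h
  · have step1 : |ullman p a - ullman p b| ≤ (2*p/Real.pi) * (a - b) ^ ((1:ℝ)/2) :=
      core p a b hp (abs_nonneg y) h ha1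
    refine step1.trans (mul_le_mul_of_nonneg_left ?_ hL)
    exact Real.rpow_le_rpow (sub_nonneg.2 h) (abs_sub_abs_le_abs_sub x y) (by norm_num)
  · have step1 : |ullman p b - ullman p a| ≤ (2*p/Real.pi) * (b - a) ^ ((1:ℝ)/2) :=
      core p b a hp (abs_nonneg x) h hb1
    rw [abs_sub_comm]
    refine step1.trans (mul_le_mul_of_nonneg_left ?_ hL)
    refine Real.rpow_le_rpow (sub_nonneg.2 h) ?_ (by norm_num)
    rw [abs_sub_comm]
    exact abs_sub_abs_le_abs_sub y x
end

section
/- For p = ∞ the limiting density is the arcsine law: as p → ∞, f_p(x) converges for each fixed x ∈ (−1,1) to 1/(π√(1−x²)). -/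
open MeasureTheory Filter

section Aux
open Set Topology

lemma sqrtInv_integrable (c : ℝ) :
    IntegrableOn (fun t : ℝ => (t - c) ^ (-(1/2) : ℝ)) (Set.Ioo c 1) := by
  have h : IntervalIntegrable (fun t : ℝ => (t - c) ^ (-(1/2) : ℝ)) volume c 1 := by
    have := (intervalIntegral.intervalIntegrable_rpow' (a := 0) (b := 1 - c) (r := -(1/2)) (by norm_num)).comp_sub_right c
    simpa using this
  rcases le_or_gt c 1 with hc | hc
  · exact (intervalIntegrable_iff_integrableOn_Ioo_of_le hc).mp h
  · simp [Set.Ioo_eq_empty (by linarith : ¬ (c:ℝ) < 1)]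

lemma bound_aux {x t p : ℝ} (ht : |x| < t) (hp : 3/2 ≤ p) :
    t ^ (p - 1) / Real.sqrt (t ^ 2 - x ^ 2) ≤ t ^ (p - 3/2) * (t - |x|) ^ (-(1/2) : ℝ) := by
  have ht0 : 0 < t := (abs_nonneg x).trans_lt ht
  have htx : 0 < t - |x| := sub_pos.2 ht
  have h1 : Real.sqrt ((t - |x|) * t) ≤ Real.sqrt (t ^ 2 - x ^ 2) := by
    apply Real.sqrt_le_sqrt
    nlinarith [sq_abs x, abs_nonneg x]
  have h2 : (0:ℝ) < Real.sqrt ((t - |x|) * t) := Real.sqrt_pos.2 (mul_pos htx ht0)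
  calc t ^ (p - 1) / Real.sqrt (t ^ 2 - x ^ 2)
      ≤ t ^ (p - 1) / Real.sqrt ((t - |x|) * t) := by
        apply div_le_div_of_nonneg_left (Real.rpow_nonneg ht0.le _) h2 h1
    _ = t ^ (p - 3/2) * (t - |x|) ^ (-(1/2) : ℝ) := by
        rw [Real.sqrt_mul htx.le, Real.sqrt_eq_rpow, Real.sqrt_eq_rpow,
          Real.rpow_neg htx.le, div_eq_mul_inv, mul_inv,
          ← Real.rpow_neg ht0.le, ← Real.rpow_neg htx.le,
          mul_comm ((t - |x|) ^ (-(1/2):ℝ)) (t ^ (-(1/2):ℝ)), ← mul_assoc, ← Real.rpow_add ht0]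
        congr 1
        ring

lemma ullman_cont {x p : ℝ} :
    ContinuousOn (fun t : ℝ => t ^ (p - 1) / Real.sqrt (t ^ 2 - x ^ 2)) (Set.Ioo |x| 1) := by
  apply ContinuousOn.div
  · intro t ht
    exact (Real.continuousAt_rpow_const t _
      (Or.inl ((abs_nonneg x).trans_lt ht.1).ne')).continuousWithinAt
  · exact (Real.continuous_sqrt.comp ((continuous_pow 2).sub continuous_const)).continuousOn
  · intro t ht
    have : 0 < t ^ 2 - x ^ 2 := by
      have := ht.1
      nlinarith [sq_abs x, abs_nonneg x]
    exact (Real.sqrt_pos.2 this).ne'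

lemma ullman_integrableOn {x : ℝ} (hx : x ∈ Set.Ioo (-1:ℝ) 1) {p : ℝ} (hp : 3/2 ≤ p) :
    IntegrableOn (fun t : ℝ => t ^ (p - 1) / Real.sqrt (t ^ 2 - x ^ 2)) (Set.Ioo |x| 1) := by
  apply Integrable.mono' (sqrtInv_integrable |x|)
    (ullman_cont.aestronglyMeasurable measurableSet_Ioo)
  filter_upwards [ae_restrict_mem measurableSet_Ioo] with t ht
  have ht0 : 0 < t := (abs_nonneg x).trans_lt ht.1
  have htt : 0 < t ^ 2 - x ^ 2 := by nlinarith [sq_abs x, abs_nonneg x, ht.1]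
  rw [Real.norm_eq_abs, abs_of_nonneg (div_nonneg (Real.rpow_nonneg ht0.le _) (Real.sqrt_nonneg _))]
  calc t ^ (p - 1) / Real.sqrt (t ^ 2 - x ^ 2)
      ≤ t ^ (p - 3/2) * (t - |x|) ^ (-(1/2) : ℝ) := bound_aux ht.1 hp
    _ ≤ 1 * (t - |x|) ^ (-(1/2) : ℝ) := by
        apply mul_le_mul_of_nonneg_right (Real.rpow_le_one ht0.le ht.2.le (by linarith))
          (Real.rpow_nonneg (by linarith [ht.1]) _)
    _ = (t - |x|) ^ (-(1/2) : ℝ) := one_mul _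

lemma tendsto_mul_rpow_zero {a : ℝ} (ha0 : 0 < a) (ha1 : a < 1) :
    Tendsto (fun p : ℝ => p * a ^ p) atTop (nhds 0) := by
  have hlog : Real.log a < 0 := Real.log_neg ha0 ha1
  have hr : 0 < -Real.log a := by linarith
  have h1 : Tendsto (fun p : ℝ => -Real.log a * p) atTop atTop :=
    tendsto_id.const_mul_atTop hr
  have h2 := (Real.tendsto_pow_mul_exp_neg_atTop_nhds_zero 1).comp h1
  have h3 : Tendsto (fun p : ℝ => (-Real.log a)⁻¹ * ((-Real.log a * p) ^ 1 * Real.exp (-(-Real.log a * p)))) atTop (nhds ((-Real.log a)⁻¹ * 0)) := h2.const_mul _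
  rw [mul_zero] at h3
  refine h3.congr fun p => ?_
  rw [pow_one, Real.rpow_def_of_pos ha0]
  field_simp [hlog.ne]

lemma tendsto_rpow_zero {a : ℝ} (ha0 : 0 < a) (ha1 : a < 1) :
    Tendsto (fun p : ℝ => a ^ p) atTop (nhds 0) :=
  tendsto_rpow_atTop_of_base_lt_one a (by linarith) ha1

set_option maxHeartbeats 1000000 in
lemma ullman_key (x : ℝ) (hx : x ∈ Set.Ioo (-1:ℝ) 1) :
    Tendsto (fun p : ℝ => p * ∫ t in Set.Ioo |x| 1, t ^ (p - 1) / Real.sqrt (t ^ 2 - x ^ 2))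
      atTop (nhds (1 / Real.sqrt (1 - x ^ 2))) := by
  obtain ⟨hx1, hx2⟩ := hx
  have hc1 : |x| < 1 := abs_lt.2 ⟨hx1, hx2⟩
  have hx2pos : 0 < 1 - x ^ 2 := by nlinarith [sq_abs x, abs_nonneg x]
  have hs1 : 0 < Real.sqrt (1 - x ^ 2) := Real.sqrt_pos.2 hx2pos
  set L : ℝ := 1 / Real.sqrt (1 - x ^ 2) with hL
  have hLpos : 0 < L := by positivity
  rw [Metric.tendsto_nhds]
  intro ε hε
  -- choose a close to 1
  have hconta : ContinuousAt (fun a : ℝ => 1 / Real.sqrt (a ^ 2 - x ^ 2)) 1 := by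
    apply ContinuousAt.div continuousAt_const
    · exact (Real.continuous_sqrt.comp ((continuous_pow 2).sub continuous_const)).continuousAt
    · simpa using hs1.ne'
  haveI : (𝓝[Set.Ioo |x| 1] (1:ℝ)).NeBot := right_nhdsWithin_Ioo_neBot hc1
  have hev : ∀ᶠ a in 𝓝[Set.Ioo |x| 1] (1:ℝ), 1 / Real.sqrt (a ^ 2 - x ^ 2) < L + ε/2 := by
    apply Filter.Tendsto.eventually_lt_const _ hconta.continuousWithinAt.tendsto
    simp only [one_pow, hL]
    linarith
  obtain ⟨a, haε, ha⟩ := (hev.and eventually_mem_nhdsWithin).exists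
  have hax : |x| < a := ha.1
  have ha1 : a < 1 := ha.2
  have ha0 : 0 < a := (abs_nonneg x).trans_lt hax
  have haxx : 0 < a ^ 2 - x ^ 2 := by nlinarith [sq_abs x, abs_nonneg x]
  have hs2 : 0 < Real.sqrt (a ^ 2 - x ^ 2) := Real.sqrt_pos.2 haxx
  set C : ℝ := ∫ t in Set.Ioc |x| a, (t - |x|) ^ (-(1/2) : ℝ) with hC
  have h1 : Tendsto (fun p : ℝ => p * a ^ (p - 3/2) * C) atTop (nhds 0) := by
    have h := (tendsto_mul_rpow_zero ha0 ha1).mul_const ((a ^ ((3:ℝ)/2 : ℝ))⁻¹ * C)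
    rw [zero_mul] at h
    refine h.congr fun p => ?_
    rw [Real.rpow_sub ha0]
    field_simp
  have h2 : Tendsto (fun p : ℝ => a ^ p * L) atTop (nhds 0) := by
    have h := (tendsto_rpow_zero ha0 ha1).mul_const L
    rwa [zero_mul] at h
  filter_upwards [h1.eventually_lt_const (half_pos hε), h2.eventually_lt_const hε,
    eventually_ge_atTop ((3:ℝ)/2)] with p hp1 hp2 hp3
  have hp0 : 0 < p := by linarith
  have hintf : IntegrableOn (fun t : ℝ => t ^ (p - 1) / Real.sqrt (t ^ 2 - x ^ 2))
      (Set.Ioo |x| 1) := ullman_integrableOn ⟨hx1, hx2⟩ hp3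
  have hsub1 : Set.Ioc |x| a ⊆ Set.Ioo |x| 1 := fun t ht => ⟨ht.1, lt_of_le_of_lt ht.2 ha1⟩
  have hsub2 : Set.Ioo a 1 ⊆ Set.Ioo |x| 1 := Set.Ioo_subset_Ioo hax.le le_rfl
  have hint1 : IntegrableOn (fun t : ℝ => t ^ (p - 1) / Real.sqrt (t ^ 2 - x ^ 2))
      (Set.Ioc |x| a) := hintf.mono_set hsub1
  have hint2 : IntegrableOn (fun t : ℝ => t ^ (p - 1) / Real.sqrt (t ^ 2 - x ^ 2))
      (Set.Ioo a 1) := hintf.mono_set hsub2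
  have hdisj : Disjoint (Set.Ioc |x| a) (Set.Ioo a 1) := by
    rw [Set.disjoint_left]
    rintro t ⟨_, h2'⟩ ⟨h3, _⟩
    exact absurd h3 (not_lt.2 h2')
  have hsplit : (∫ t in Set.Ioo |x| 1, t ^ (p - 1) / Real.sqrt (t ^ 2 - x ^ 2)) =
      (∫ t in Set.Ioc |x| a, t ^ (p - 1) / Real.sqrt (t ^ 2 - x ^ 2)) +
      ∫ t in Set.Ioo a 1, t ^ (p - 1) / Real.sqrt (t ^ 2 - x ^ 2) := by
    rw [← setIntegral_union hdisj measurableSet_Ioo hint1 hint2,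
      Set.Ioc_union_Ioo_eq_Ioo hax.le ha1]
  set J1 : ℝ := ∫ t in Set.Ioc |x| a, t ^ (p - 1) / Real.sqrt (t ^ 2 - x ^ 2) with hJ1
  set J2 : ℝ := ∫ t in Set.Ioo a 1, t ^ (p - 1) / Real.sqrt (t ^ 2 - x ^ 2) with hJ2
  -- J1 bounds
  have hCint : IntegrableOn (fun t : ℝ => (t - |x|) ^ (-(1/2):ℝ)) (Set.Ioc |x| a) :=
    (sqrtInv_integrable |x|).mono_set hsub1
  have hJ1u : J1 ≤ a ^ (p - 3/2) * C := by
    rw [hJ1, hC]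
    rw [← integral_const_mul]
    apply setIntegral_mono_on hint1 (hCint.const_mul _) measurableSet_Ioc
    intro t ht
    calc t ^ (p - 1) / Real.sqrt (t ^ 2 - x ^ 2)
        ≤ t ^ (p - 3/2) * (t - |x|) ^ (-(1/2):ℝ) := bound_aux ht.1 hp3
      _ ≤ a ^ (p - 3/2) * (t - |x|) ^ (-(1/2):ℝ) :=
          mul_le_mul_of_nonneg_right
            (Real.rpow_le_rpow ((abs_nonneg x).trans_lt ht.1).le ht.2 (by linarith))
            (Real.rpow_nonneg (by linarith [ht.1]) _)
  have hJ1l : 0 ≤ J1 := by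
    apply setIntegral_nonneg measurableSet_Ioc
    intro t ht
    exact div_nonneg (Real.rpow_nonneg ((abs_nonneg x).trans ht.1.le) _) (Real.sqrt_nonneg _)
  -- J2 bounds
  have hmono_int : IntegrableOn (fun t : ℝ => t ^ (p-1)) (Set.Ioo a 1) := by
    have h : IntervalIntegrable (fun t : ℝ => t ^ (p-1)) volume a 1 :=
      intervalIntegral.intervalIntegrable_rpow' (by linarith)
    exact (intervalIntegrable_iff_integrableOn_Ioo_of_le ha1.le).mp h
  have hval : (∫ t in Set.Ioo a 1, t ^ (p-1)) = (1 - a ^ p) / p := by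
    rw [← integral_Ioc_eq_integral_Ioo, ← intervalIntegral.integral_of_le ha1.le,
      integral_rpow (Or.inl (by linarith : (-1:ℝ) < p - 1))]
    norm_num
  have hJ2l : (1 - a ^ p) / p / Real.sqrt (1 - x ^ 2) ≤ J2 := by
    rw [← hval, ← integral_div, hJ2]
    apply setIntegral_mono_on (hmono_int.div_const _) hint2 measurableSet_Ioo
    intro t ht
    have ht0 : 0 < t := ha0.trans ht.1
    exact div_le_div_of_nonneg_left (Real.rpow_nonneg ht0.le _)
      (Real.sqrt_pos.2 (by nlinarith [sq_abs x, abs_nonneg x, hax, ht.1]))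
      (Real.sqrt_le_sqrt (by nlinarith [ht.2]))
  have hJ2u : J2 ≤ (1 - a ^ p) / p / Real.sqrt (a ^ 2 - x ^ 2) := by
    rw [← hval, ← integral_div, hJ2]
    apply setIntegral_mono_on hint2 (hmono_int.div_const _) measurableSet_Ioo
    intro t ht
    have ht0 : 0 < t := ha0.trans ht.1
    exact div_le_div_of_nonneg_left (Real.rpow_nonneg ht0.le _) hs2
      (Real.sqrt_le_sqrt (by nlinarith [ht.1]))
  -- assemble
  have hap1 : a ^ p ≤ 1 := Real.rpow_le_one ha0.le ha1.le hp0.le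
  have hap0 : 0 ≤ a ^ p := Real.rpow_nonneg ha0.le p
  have e1 : p * ((1 - a ^ p) / p / Real.sqrt (a ^ 2 - x ^ 2)) =
      (1 - a ^ p) / Real.sqrt (a ^ 2 - x ^ 2) := by
    rw [div_div, mul_div_assoc', mul_div_mul_left _ _ hp0.ne']
  have e2 : p * ((1 - a ^ p) / p / Real.sqrt (1 - x ^ 2)) =
      (1 - a ^ p) / Real.sqrt (1 - x ^ 2) := by
    rw [div_div, mul_div_assoc', mul_div_mul_left _ _ hp0.ne']
  have u1 : p * J1 ≤ p * a ^ (p - 3/2) * C := by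
    rw [mul_assoc]
    exact mul_le_mul_of_nonneg_left hJ1u hp0.le
  have u2 : p * J2 ≤ (1 - a ^ p) / Real.sqrt (a ^ 2 - x ^ 2) := by
    rw [← e1]
    exact mul_le_mul_of_nonneg_left hJ2u hp0.le
  have u3 : (1 - a ^ p) / Real.sqrt (a ^ 2 - x ^ 2) ≤ 1 / Real.sqrt (a ^ 2 - x ^ 2) := by
    gcongr
    linarith
  have l1 : (1 - a ^ p) / Real.sqrt (1 - x ^ 2) ≤ p * J2 := by
    rw [← e2]
    exact mul_le_mul_of_nonneg_left hJ2l hp0.le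
  have l2 : (1 - a ^ p) / Real.sqrt (1 - x ^ 2) = L - a ^ p * L := by
    rw [hL]
    ring
  have l3 : 0 ≤ p * J1 := mul_nonneg hp0.le hJ1l
  rw [Real.dist_eq, abs_sub_lt_iff, hsplit]
  constructor
  · nlinarith [u1, u2, u3, hp1, haε, l3]
  · nlinarith [l1, l2, hp2, l3]

end Aux

theorem ullman_tendsto_arcsine (x : ℝ) (hx : x ∈ Set.Ioo (-1 : ℝ) 1) :
    Tendsto (fun p : ℝ => ullman p x) atTop
      (nhds (1 / (Real.pi * Real.sqrt (1 - x ^ 2)))) := by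
  have h := (ullman_key x hx).const_mul (1 / Real.pi)
  have heq : ∀ p : ℝ, ullman p x =
      1 / Real.pi * (p * ∫ t in Set.Ioo |x| 1, t ^ (p - 1) / Real.sqrt (t ^ 2 - x ^ 2)) := by
    intro p
    rw [ullman]
    ring
  have hlim : (1:ℝ) / Real.pi * (1 / Real.sqrt (1 - x ^ 2)) =
      1 / (Real.pi * Real.sqrt (1 - x ^ 2)) := by
    rw [div_mul_div_comm, one_mul]
  rw [← hlim]
  exact h.congr fun p => (heq p).symm
end
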